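/- arXiv:2003.13128 — 3 statements merged into one kernel-verified Lean document; each statement's English description precedes it below -/
import Mathlib

section
/- Let u be a potential game with potential function φ on a finite strategy space. Then the minimal FDH-graph of u equals the undirected FDH-graph associated to the minimal hypergraph of φ: F_u = F^{H_φ}, i.e., (i, J) is a hyperlink of F_u if and only if {i} ∪ J is a hyperlink of H_φ with i ∉ J. In particular, the minimal FDH-graph of a potential game is undirected. -/
def SepFun {V : Type*} {A : V → Type*} (f : (∀ i, A i) → ℝ) (L : Finset (Finset V)) : Prop :=
  ∃ g : Finset V → (∀ i, A i) → ℝ,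
    (∀ J ∈ L, ∀ x y : ∀ i, A i, (∀ i ∈ J, x i = y i) → g J x = g J y) ∧
    ∀ x, f x = ∑ J ∈ L, g J x

def SubH {V : Type*} (L1 L2 : Finset (Finset V)) : Prop :=
  ∀ J ∈ L1, ∃ K ∈ L2, J ⊆ K

def IsSimpleH {V : Type*} (L : Finset (Finset V)) : Prop :=
  ∀ J ∈ L, ∀ K ∈ L, J ⊆ K → J = K

def GameSep {V : Type*} [DecidableEq V] {A : V → Type*}
    (u : V → (∀ i, A i) → ℝ) (D : Finset (V × Finset V)) : Prop :=
  ∀ i : V, ∃ (v : Finset V → (∀ j, A j) → ℝ) (n : (∀ j, A j) → ℝ),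
    (∀ J, (i, J) ∈ D → ∀ x y : ∀ j, A j,
      (∀ j ∈ insert i J, x j = y j) → v J x = v J y) ∧
    (∀ x y : ∀ j, A j, (∀ j, j ≠ i → x j = y j) → n x = n y) ∧
    ∀ x, u i x = (∑ p ∈ D.filter (fun p => p.1 = i), v p.2 x) + n x

def SubF {V : Type*} (D1 D2 : Finset (V × Finset V)) : Prop :=
  ∀ p ∈ D1, ∃ q ∈ D2, q.1 = p.1 ∧ p.2 ⊆ q.2

def IsSimpleF {V : Type*} (D : Finset (V × Finset V)) : Prop :=
  ∀ p ∈ D, ∀ q ∈ D, p.1 = q.1 → p.2 ⊆ q.2 → p = q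

/-- `φ` is a potential for the game `u`. -/
def IsPotential {V : Type*} {A : V → Type*}
    (u : V → (∀ i, A i) → ℝ) (φ : (∀ i, A i) → ℝ) : Prop :=
  ∀ (i : V) (x y : ∀ j, A j), (∀ j, j ≠ i → x j = y j) → u i x - u i y = φ x - φ y

/-!
Since `u i - φ` does not depend on player `i`'s action, a decomposition of `φ` along `H`
becomes one of `u` along `F^H`, the terms of `φ` not involving `i` going into the part of `u i`
independent of `x i`; conversely a decomposition of `u i` along `D` becomes one of `φ` along
the sets `{i} ∪ J`, `(i, J) ∈ D`, together with `V ∖ {i}`. Minimality of `F_u` and of `H_φ` turns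
these into `F_u ⊑ F^{H_φ}` and `H_φ ⊑ {{i} ∪ J} ∪ {V ∖ {i}}` for every `i`, and simplicity
of both makes the two refinements an equality.
-/

open Finset

section Separability

variable {V : Type*} {A : V → Type*}

theorem SepFun.of_eq_sum [DecidableEq V] {ι : Type*} {f : (∀ i, A i) → ℝ} (s : Finset ι)
    (e : ι → Finset V) (h : ι → (∀ i, A i) → ℝ) (hdep : ∀ k ∈ s, DependsOn (h k) (e k))
    (hf : ∀ x, f x = ∑ k ∈ s, h k x) : SepFun f (s.image e) := by
  refine ⟨fun S x => ∑ k ∈ s with e k = S, h k x, fun S _ x y hxy => sum_congr rfl fun k hk => ?_,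
    fun x => ?_⟩
  · obtain ⟨hks, rfl⟩ := mem_filter.1 hk
    exact hdep k hks hxy
  · rw [hf, sum_fiberwise_of_maps_to fun k hk => mem_image_of_mem e hk]

theorem SepFun.add [DecidableEq V] {f g : (∀ i, A i) → ℝ} {L M : Finset (Finset V)}
    (hf : SepFun f L) (hg : SepFun g M) : SepFun (f + g) (L ∪ M) := by
  obtain ⟨F, hFdep, hFsum⟩ := hf
  obtain ⟨G, hGdep, hGsum⟩ := hg
  refine ⟨fun S x => (if S ∈ L then F S x else 0) + (if S ∈ M then G S x else 0), ?_, fun x => ?_⟩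
  · intro S _ x y hxy
    dsimp only
    congr 1 <;> split_ifs with hS
    exacts [hFdep S hS x y hxy, rfl, hGdep S hS x y hxy, rfl]
  · rw [sum_add_distrib, sum_ite_mem, sum_ite_mem, union_inter_cancel_left,
      union_inter_cancel_right, Pi.add_apply, hFsum, hGsum]

end Separability

section FDHGraph

variable {V : Type*} [DecidableEq V] {A : V → Type*}

/-- The undirected FDH-graph `F^H`. -/
def undirectedFDH (H : Finset (Finset V)) : Finset (V × Finset V) :=
  H.biUnion fun S => S.image fun j => (j, S.erase j)

theorem mem_undirectedFDH {H : Finset (Finset V)} {p : V × Finset V} :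
    p ∈ undirectedFDH H ↔ p.1 ∉ p.2 ∧ insert p.1 p.2 ∈ H := by
  simp only [undirectedFDH, mem_biUnion, mem_image]
  constructor
  · rintro ⟨S, hS, j, hj, rfl⟩
    exact ⟨notMem_erase j S, by rwa [insert_erase hj]⟩
  · rintro ⟨hp, hH⟩
    exact ⟨_, hH, p.1, mem_insert_self _ _, by rw [erase_insert hp]⟩

theorem filter_fst_undirectedFDH (H : Finset (Finset V)) (i : V) :
    (undirectedFDH H).filter (·.1 = i) = (H.filter (i ∈ ·)).image fun S => (i, S.erase i) := by
  ext ⟨j, J⟩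
  simp only [mem_filter, mem_undirectedFDH, mem_image, Prod.mk.injEq]
  constructor
  · rintro ⟨⟨hjJ, hH⟩, rfl⟩
    exact ⟨_, ⟨hH, mem_insert_self j J⟩, rfl, erase_insert hjJ⟩
  · rintro ⟨S, ⟨hS, hiS⟩, rfl, rfl⟩
    exact ⟨⟨notMem_erase i S, by rwa [insert_erase hiS]⟩, rfl⟩

theorem gameSep_undirectedFDH {u : V → (∀ i, A i) → ℝ} {φ : (∀ i, A i) → ℝ}
    (hpot : IsPotential u φ) {H : Finset (Finset V)} (hH : SepFun φ H) :
    GameSep u (undirectedFDH H) := by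
  obtain ⟨g, hgdep, hgsum⟩ := hH
  intro i
  refine ⟨fun J => g (insert i J), fun x => u i x - φ x + ∑ S ∈ H with i ∉ S, g S x,
    fun J hJ => hgdep _ (mem_undirectedFDH.1 hJ).2, fun x y hxy => ?_, fun x => ?_⟩
  · have hrest : ∀ S ∈ H.filter (i ∉ ·), g S x = g S y := fun S hS =>
      hgdep S (mem_filter.1 hS).1 x y fun j hj =>
        hxy j (ne_of_mem_of_not_mem hj (mem_filter.1 hS).2)
    dsimp only
    rw [sum_congr rfl hrest]
    linarith [hpot i x y hxy]
  · have hinj : Set.InjOn (fun S : Finset V => (i, S.erase i)) (H.filter (i ∈ ·)) :=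
      fun S hS T hT hST =>
        erase_injOn' i (mem_filter.1 hS).2 (mem_filter.1 hT).2 (Prod.mk.inj hST).2
    have hfiber : ∑ S ∈ H with i ∈ S, g (insert i (S.erase i)) x = ∑ S ∈ H with i ∈ S, g S x :=
      sum_congr rfl fun S hS => by rw [insert_erase (mem_filter.1 hS).2]
    dsimp only
    rw [filter_fst_undirectedFDH, sum_image hinj, hfiber]
    linarith [hgsum x, sum_filter_add_sum_filter_not H (i ∈ ·) (g · x)]

variable [Fintype V]

/-- The hyperlink `V ∖ {i}` carries the part of `u i - φ` that does not depend on `x i`. -/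
def playerHypergraph (D : Finset (V × Finset V)) (i : V) : Finset (Finset V) :=
  (D.filter (·.1 = i)).image (fun p => insert i p.2) ∪ {univ.erase i}

theorem sepFun_playerHypergraph {u : V → (∀ i, A i) → ℝ} {φ : (∀ i, A i) → ℝ}
    (hpot : IsPotential u φ) {D : Finset (V × Finset V)} (hD : GameSep u D) (i : V) :
    SepFun φ (playerHypergraph D i) := by
  obtain ⟨v, n, hvdep, hndep, hu⟩ := hD i
  have hφ : φ = (fun x => ∑ p ∈ D with p.1 = i, v p.2 x) + fun x => n x + (φ x - u i x) := by
    ext x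
    simp only [Pi.add_apply, hu]
    ring
  rw [hφ]
  refine (SepFun.of_eq_sum _ _ _ (fun p hp => ?_) fun _ => rfl).add ⟨fun _ x => n x + (φ x - u i x),
    fun S hS x y hxy => ?_, fun x => (sum_singleton _ _).symm⟩
  · obtain ⟨hpD, rfl⟩ := mem_filter.1 hp
    exact fun x y hxy => hvdep p.2 hpD x y hxy
  · have hoff : ∀ j, j ≠ i → x j = y j := fun j hj =>
      hxy j (by rw [mem_singleton.1 hS]; exact mem_erase.2 ⟨hj, mem_univ j⟩)
    linarith [hndep x y hoff, hpot i x y hoff]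

theorem mk_erase_mem_of_subF_undirectedFDH {H : Finset (Finset V)} {D : Finset (V × Finset V)} {i : V}
    (hH : IsSimpleH H) (hDH : SubF D (undirectedFDH H)) (hHD : SubH H (playerHypergraph D i))
    {S : Finset V} (hS : S ∈ H) (hiS : i ∈ S) : (i, S.erase i) ∈ D := by
  obtain ⟨K, hK, hSK⟩ := hHD S hS
  simp only [playerHypergraph, mem_union, mem_image, mem_filter, mem_singleton] at hK
  rcases hK with ⟨⟨j, J⟩, ⟨hJD, rfl⟩, rfl⟩ | rfl
  · obtain ⟨⟨k, Q⟩, hQ, rfl, hJQ⟩ := hDH _ hJD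
    obtain ⟨hjQ, hQH⟩ := mem_undirectedFDH.1 hQ
    have hJQ' : insert k J ⊆ insert k Q := insert_subset_insert k hJQ
    have hSQ : S = insert k Q := hH S hS _ hQH (hSK.trans hJQ')
    have hSJ : S = insert k J := subset_antisymm hSK (hSQ ▸ hJQ')
    rwa [hSJ, erase_insert fun hjJ => hjQ (hJQ hjJ)]
  · exact absurd (hSK hiS) (notMem_erase i univ)

theorem eq_undirectedFDH {H : Finset (Finset V)} {D : Finset (V × Finset V)}
    (hH : IsSimpleH H) (hD : IsSimpleF D) (hDH : SubF D (undirectedFDH H))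
    (hHD : ∀ i, SubH H (playerHypergraph D i)) : D = undirectedFDH H := by
  ext ⟨i, J⟩
  constructor
  · intro hJ
    obtain ⟨q, hq, hqi, hJq⟩ := hDH _ hJ
    obtain ⟨hq1, hqH⟩ := mem_undirectedFDH.1 hq
    have hqD := mk_erase_mem_of_subF_undirectedFDH hH hDH (hHD q.1) hqH (mem_insert_self _ _)
    rw [erase_insert hq1] at hqD
    rwa [hD _ hJ q hqD hqi.symm hJq]
  · intro hJ
    obtain ⟨hiJ, hJH⟩ := mem_undirectedFDH.1 hJ
    simpa only [erase_insert hiJ] using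
      mk_erase_mem_of_subF_undirectedFDH hH hDH (hHD i) hJH (mem_insert_self i J)

end FDHGraph

theorem minimal_FDH_of_potential_general {V : Type*} [Fintype V] [DecidableEq V]
    {A : V → Type*}
    (u : V → (∀ i, A i) → ℝ) (φ : (∀ i, A i) → ℝ)
    (hpot : IsPotential u φ)
    (Hφ : Finset (Finset V))
    (hHs : IsSimpleH Hφ) (hHsep : SepFun φ Hφ)
    (hHmin : ∀ M : Finset (Finset V), SepFun φ M → SubH Hφ M)
    (Fu : Finset (V × Finset V))
    (hFs : IsSimpleF Fu) (hFsep : GameSep u Fu)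
    (hFmin : ∀ D : Finset (V × Finset V), GameSep u D → SubF Fu D) :
    ∀ p : V × Finset V, p ∈ Fu ↔ (p.1 ∉ p.2 ∧ insert p.1 p.2 ∈ Hφ) := by
  have hFH : Fu = undirectedFDH Hφ :=
    eq_undirectedFDH hHs hFs (hFmin _ (gameSep_undirectedFDH hpot hHsep))
      fun i => hHmin _ (sepFun_playerHypergraph hpot hFsep i)
  intro p
  rw [hFH, mem_undirectedFDH]

/-- For a potential game `u` with potential `φ`, the minimal FDH-graph of `u` is the
undirected FDH-graph associated to the minimal hypergraph of `φ`: `(i, J)` is a hyperlink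
of `F_u` iff `i ∉ J` and `{i} ∪ J` is a hyperlink of `H_φ`. -/
theorem minimal_FDH_of_potential {V : Type*} [Fintype V] [DecidableEq V]
    {A : V → Type*} [∀ i, Fintype (A i)] [∀ i, Nonempty (A i)]
    (u : V → (∀ i, A i) → ℝ) (φ : (∀ i, A i) → ℝ)
    (hpot : IsPotential u φ)
    (Hφ : Finset (Finset V))
    (hHs : IsSimpleH Hφ) (hHsep : SepFun φ Hφ)
    (hHmin : ∀ M : Finset (Finset V), SepFun φ M → SubH Hφ M)
    (Fu : Finset (V × Finset V))
    (hFs : IsSimpleF Fu) (hFsep : GameSep u Fu)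
    (hFmin : ∀ D : Finset (V × Finset V), GameSep u D → SubF Fu D) :
    ∀ p : V × Finset V, p ∈ Fu ↔ (p.1 ∉ p.2 ∧ insert p.1 p.2 ∈ Hφ) :=
  minimal_FDH_of_potential_general u φ hpot Hφ hHs hHsep hHmin Fu hFs hFsep hFmin
end

section
/- The minimal graph G_u of a potential game u is undirected: if (i,j) is an edge of G_u then so is (j,i). -/
def Graphical {V : Type*} [DecidableEq V] {A : V → Type*}
    (u : V → (∀ i, A i) → ℝ) (E : Finset (V × V)) : Prop :=
  ∀ i : V, ∃ v n : (∀ j, A j) → ℝ,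
    (∀ x y : ∀ j, A j,
      (∀ j ∈ insert i ((E.filter (fun p => p.1 = i)).image Prod.snd), x j = y j) →
        v x = v y) ∧
    (∀ x y : ∀ j, A j, (∀ j, j ≠ i → x j = y j) → n x = n y) ∧
    ∀ x, u i x = v x + n x

/-
If `(i, j)` were an edge of `G_u` without `(j, i)`, the edge `(i, j)` could be removed. Write
`u_i = v_i + n_i`. The potential makes `v_i - φ` independent of `x_i` and `φ - v_j` independent
of `x_j`, while `v_j` is independent of `x_i` because `i ∉ {j} ∪ N_j`. Hence
`v_i = (v_j - (φ - v_i)) + (φ - v_j)` splits into a part independent of `x_i` and a part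
independent of `x_j`. Freezing `x_j` at some value `y` in `v_i` only changes the first part, and
that change is independent of `x_i`, so it can be moved into `n_i`. This shows that `u` is
graphical on the smaller graph, contradicting minimality.
-/

section DependsOn

variable {ι β : Type*} {A : ι → Type*} {f g : (Π l, A l) → β} {s : Set ι}

lemma DependsOn.add [Add β] (hf : DependsOn f s) (hg : DependsOn g s) : DependsOn (f + g) s :=
  fun _ _ h ↦ congr_arg₂ (· + ·) (hf h) (hg h)

lemma DependsOn.sub [Sub β] (hf : DependsOn f s) (hg : DependsOn g s) : DependsOn (f - g) s :=
  fun _ _ h ↦ congr_arg₂ (· - ·) (hf h) (hg h)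

lemma DependsOn.comp_update [DecidableEq ι] (hf : DependsOn f s) (j : ι) (y : A j) :
    DependsOn (fun x ↦ f (Function.update x j y)) (s \ {j}) := by
  intro x x' h
  apply hf
  intro l hl
  by_cases hlj : l = j
  · subst hlj
    simp
  · simp only [Function.update_of_ne hlj]
    exact h l ⟨hl, hlj⟩

lemma DependsOn.comp_update_eq [DecidableEq ι] {j : ι} (hf : DependsOn f {j}ᶜ) (x : Π l, A l)
    (y : A j) : f (Function.update x j y) = f x :=
  hf fun _ hl ↦ Function.update_of_ne hl _ _

lemma exists_add_eq_add_dependsOn_sdiff [DecidableEq ι] [AddCommGroup β] {t : Set ι}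
    {v n a b : (Π l, A l) → β} {j : ι} (hv : DependsOn v s) (hn : DependsOn n t)
    (ha : DependsOn a t) (hb : DependsOn b {j}ᶜ) (hvab : v = a + b) (y : A j) :
    ∃ v' n', DependsOn v' (s \ {j}) ∧ DependsOn n' t ∧ v + n = v' + n' := by
  refine ⟨fun x ↦ v (Function.update x j y), n + a - fun x ↦ a (Function.update x j y),
    hv.comp_update j y, (hn.add ha).sub ((ha.comp_update j y).mono Set.sdiff_subset), ?_⟩
  funext x
  simp only [hvab, Pi.add_apply, Pi.sub_apply, hb.comp_update_eq]
  abel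

end DependsOn

section Games

variable {V : Type*} {A : V → Type*}

lemma IsPotential.dependsOn_sub {u : V → (Π l, A l) → ℝ} {φ : (Π l, A l) → ℝ}
    (hpot : IsPotential u φ) {i : V} {v n : (Π l, A l) → ℝ} (hn : DependsOn n {i}ᶜ)
    (hu : u i = v + n) : DependsOn (φ - v) {i}ᶜ := by
  intro x y h
  have hxy := hpot i x y h
  have hnxy := hn h
  simp only [hu, Pi.add_apply, Pi.sub_apply] at hxy ⊢
  linarith

section Graphical

variable [DecidableEq V]

/-- The paper's `{i} ∪ N_i`. -/
def closedNbhd (E : Finset (V × V)) (i : V) : Finset V :=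
  insert i ((E.filter fun p ↦ p.1 = i).image Prod.snd)

lemma mem_closedNbhd {E : Finset (V × V)} {i l : V} :
    l ∈ closedNbhd E i ↔ l = i ∨ (i, l) ∈ E := by
  simp [closedNbhd, eq_comm]

lemma closedNbhd_erase_of_ne {E : Finset (V × V)} {i j k : V} (hk : k ≠ i) :
    closedNbhd (E.erase (i, j)) k = closedNbhd E k := by
  ext l
  simp [mem_closedNbhd, hk]

lemma closedNbhd_erase_self {E : Finset (V × V)} {i j : V} (hij : i ≠ j) :
    closedNbhd (E.erase (i, j)) i = (closedNbhd E i).erase j := by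
  ext l
  by_cases hl : l = j
  · simp [mem_closedNbhd, hl, hij.symm]
  · simp [mem_closedNbhd, hl]

lemma graphical_iff {u : V → (Π l, A l) → ℝ} {E : Finset (V × V)} :
    Graphical u E ↔ ∀ i, ∃ v n : (Π l, A l) → ℝ,
      DependsOn v (closedNbhd E i) ∧ DependsOn n {i}ᶜ ∧ u i = v + n := by
  simp only [funext_iff, Pi.add_apply]
  rfl

theorem IsPotential.graphical_erase {u : V → (Π l, A l) → ℝ} {φ : (Π l, A l) → ℝ}
    (hpot : IsPotential u φ) {E : Finset (V × V)} (hg : Graphical u E) {i j : V}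
    [Nonempty (A j)] (hij : i ≠ j) (hji : (j, i) ∉ E) : Graphical u (E.erase (i, j)) := by
  rw [graphical_iff] at hg ⊢
  intro k
  obtain ⟨v, n, hv, hn, hu⟩ := hg k
  by_cases hk : k = i
  · subst k
    obtain ⟨w, m, hw, hm, hu'⟩ := hg j
    have hw' : DependsOn w {i}ᶜ := hw.mono fun l hl hlk ↦ by
      subst hlk
      rcases mem_closedNbhd.mp hl with rfl | h
      exacts [hij rfl, hji h]
    obtain ⟨v', n', hv', hn', hvn⟩ := exists_add_eq_add_dependsOn_sdiff hv hn
      (hw'.sub (hpot.dependsOn_sub hn hu)) (hpot.dependsOn_sub hm hu')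
      (by abel) (Classical.arbitrary (A j))
    refine ⟨v', n', ?_, hn', hu.trans hvn⟩
    rwa [closedNbhd_erase_self hij, Finset.coe_erase]
  · exact ⟨v, n, by rwa [closedNbhd_erase_of_ne hk], hn, hu⟩

end Graphical

end Games

theorem minimal_graph_of_potential_symm_general {V : Type*} [DecidableEq V]
    {A : V → Type*} [∀ i, Nonempty (A i)]
    (u : V → (∀ i, A i) → ℝ) (φ : (∀ i, A i) → ℝ)
    (hpot : IsPotential u φ)
    (Eu : Finset (V × V))
    (hg : Graphical u Eu) (hgmin : ∀ E : Finset (V × V), Graphical u E → Eu ⊆ E) :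
    ∀ i j : V, (i, j) ∈ Eu → (j, i) ∈ Eu := by
  intro i j hij
  by_contra hji
  have hne : i ≠ j := by
    rintro rfl
    exact hji hij
  exact Eu.notMem_erase (i, j) (hgmin _ (hpot.graphical_erase hg hne hji) hij)

/-- The minimal graph of a potential game is undirected: if `(i,j)` is an edge of `G_u`,
so is `(j,i)`. -/
theorem minimal_graph_of_potential_symm {V : Type*} [Fintype V] [DecidableEq V]
    {A : V → Type*} [∀ i, Fintype (A i)] [∀ i, Nonempty (A i)]
    (u : V → (∀ i, A i) → ℝ) (φ : (∀ i, A i) → ℝ)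
    (hpot : IsPotential u φ)
    (Eu : Finset (V × V))
    (hg : Graphical u Eu) (hgmin : ∀ E : Finset (V × V), Graphical u E → Eu ⊆ E) :
    ∀ i j : V, (i, j) ∈ Eu → (j, i) ∈ Eu :=
  minimal_graph_of_potential_symm_general u φ hpot Eu hg hgmin
end

section
/- (Hammersley–Clifford) Let X = (X_i)_{i∈V} be a finite-valued random vector with strictly positive joint distribution that is a Markov random field with respect to an undirected graph G: for each node i, X_i is conditionally independent of X_{V \ N_i^•} given X_{N_i}, where N_i^• = N_i ∪ {i}. Then the joint distribution factorizes over the maximal cliques of G: P(X = x) = ∏_{C ∈ Cl(G)} ζ_C(x_C) for some positive functions ζ_C depending only on the coordinates in C. -/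
/-!
Fix a reference configuration `a` and expand `f = log P` by Möbius inversion on the subsets
of `V`: `f x = ∑ S, φ S x`, where `φ S x = ∑ T ⊆ S, (-1)^|S \ T| f (x on T, a off T)` depends
only on `x` restricted to `S`. If `S` contains two non-adjacent vertices `i, j`, the Markov
property at `i` says that `T ↦ f (x on T, a off T)` has vanishing mixed second difference in
`i` and `j`, so the alternating sum defining `φ S` cancels and `φ S = 0`. Assigning every
clique to a maximal clique containing it and exponentiating gives the factorization.
-/

def IsClique' {V : Type*} (E : Finset (V × V)) (C : Finset V) : Prop :=
  ∀ i ∈ C, ∀ j ∈ C, i ≠ j → (i, j) ∈ E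

def IsMaxClique {V : Type*} (E : Finset (V × V)) (C : Finset V) : Prop :=
  IsClique' E C ∧ ∀ C' : Finset V, IsClique' E C' → C ⊆ C' → C = C'

open Finset

namespace Finset
variable {α M : Type*} [DecidableEq α] [AddCommGroup M]

def moebiusTransform (g : Finset α → M) (S : Finset α) : M :=
  ∑ T ∈ S.powerset, (-1 : ℤ) ^ #(S \ T) • g T

theorem sum_powerset_moebiusTransform (g : Finset α → M) (U : Finset α) :
    ∑ S ∈ U.powerset, moebiusTransform g S = g U := by
  have hswap : ∀ S T, S ∈ U.powerset ∧ T ∈ S.powerset ↔ S ∈ Icc T U ∧ T ∈ U.powerset := by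
    intro S T
    simp only [mem_powerset, mem_Icc]
    exact ⟨fun h => ⟨⟨h.2, h.1⟩, h.2.trans h.1⟩, fun h => ⟨h.1.2, h.1.1⟩⟩
  have hinner : ∀ T ∈ U.powerset,
      ∑ S ∈ Icc T U, (-1 : ℤ) ^ #(S \ T) • g T = if T = U then g T else 0 := by
    intro T hT
    have hTU := mem_powerset.1 hT
    have hsdiff : ∀ R ∈ (U \ T).powerset, (T ∪ R) \ T = R := fun R hR => by
      rw [union_sdiff_left, sdiff_eq_self_of_disjoint]
      exact disjoint_of_subset_left (mem_powerset.1 hR) sdiff_disjoint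
    rw [Icc_eq_image_powerset hTU, sum_image fun R hR R' hR' h => by
      rw [← hsdiff R hR, ← hsdiff R' hR', h]]
    rw [← sum_smul, sum_congr rfl fun R hR => by rw [hsdiff R hR], sum_powerset_neg_one_pow_card]
    have hUT : U ⊆ T ↔ T = U := ⟨subset_antisymm hTU, fun h => h ▸ subset_rfl⟩
    simp only [sdiff_eq_empty_iff_subset, hUT, ite_smul, one_smul, zero_smul]
  unfold moebiusTransform
  rw [sum_comm' hswap, sum_congr rfl hinner, sum_ite_eq', if_pos (mem_powerset_self U)]

theorem moebiusTransform_eq_of_mem {j : α} {S : Finset α} (hj : j ∈ S) (g : Finset α → M) :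
    moebiusTransform g S = moebiusTransform (fun T => g (insert j T) - g T) (S.erase j) := by
  have hjS := notMem_erase j S
  unfold moebiusTransform
  conv_lhs => rw [← insert_erase hj]
  rw [sum_powerset_insert hjS, ← sum_add_distrib]
  refine sum_congr rfl fun T hT => ?_
  have hjT : j ∉ T := fun h => hjS (mem_powerset.1 hT h)
  have hjST : j ∉ S.erase j \ T := fun h => hjS (mem_sdiff.1 h).1
  rw [insert_sdiff_of_notMem _ hjT, insert_sdiff_insert, sdiff_insert_of_notMem hjS,
    card_insert_of_notMem hjST, pow_succ, mul_neg_one, neg_smul, smul_sub]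
  abel

theorem moebiusTransform_eq_zero {i j : α} {S : Finset α} (hi : i ∈ S) (hj : j ∈ S) (hij : i ≠ j)
    (g : Finset α → M)
    (hg : ∀ T ⊆ (S.erase i).erase j,
      g (insert i (insert j T)) + g T = g (insert i T) + g (insert j T)) :
    moebiusTransform g S = 0 := by
  rw [moebiusTransform_eq_of_mem hi, moebiusTransform_eq_of_mem (mem_erase.2 ⟨hij.symm, hj⟩)]
  refine sum_eq_zero fun T hT => ?_
  dsimp only
  rw [sub_eq_zero.2 (sub_eq_sub_iff_add_eq_add.2 (hg T (mem_powerset.1 hT))), smul_zero]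

end Finset

section GibbsPotential
variable {V M : Type*} [DecidableEq V] {A : V → Type*} [AddCommGroup M]

def gibbsPotential (a : ∀ i, A i) (f : (∀ i, A i) → M) (S : Finset V) (x : ∀ i, A i) : M :=
  moebiusTransform (fun T => f (T.piecewise x a)) S

theorem sum_gibbsPotential [Fintype V] (a : ∀ i, A i) (f : (∀ i, A i) → M) (x : ∀ i, A i) :
    ∑ S, gibbsPotential a f S x = f x := by
  rw [← powerset_univ]
  simp only [gibbsPotential, sum_powerset_moebiusTransform, piecewise_univ]

theorem gibbsPotential_dependsOn (a : ∀ i, A i) (f : (∀ i, A i) → M) (S : Finset V) :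
    DependsOn (gibbsPotential a f S) S := by
  intro x y hxy
  refine sum_congr rfl fun T hT => ?_
  dsimp only
  rw [T.piecewise_congr (fun i hi => hxy i (mem_powerset.1 hT hi)) fun _ _ => rfl]

theorem gibbsPotential_eq_zero {a : ∀ i, A i} {f : (∀ i, A i) → M} {i j : V} {S : Finset V}
    (hi : i ∈ S) (hj : j ∈ S) (hij : i ≠ j) (x : ∀ i, A i)
    (hf : ∀ T : Finset V, i ∉ T → f ((insert i (insert j T)).piecewise x a) + f (T.piecewise x a) =
      f ((insert i T).piecewise x a) + f ((insert j T).piecewise x a)) :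
    gibbsPotential a f S x = 0 :=
  moebiusTransform_eq_zero hi hj hij _ fun T hT =>
    hf T fun hiT => notMem_erase i S (erase_subset j _ (hT hiT))

end GibbsPotential

/-- The configurations `x` on `insert i T` and on `insert j T` (and `a` elsewhere) agree off
`{i, j}`; exchanging their `i`-th coordinates yields `x` on `insert i (insert j T)` and on `T`. -/
theorem mul_piecewise_insert_insert {V : Type*} [DecidableEq V] {A : V → Type*}
    {P : (∀ i, A i) → ℝ} {N : Finset V} {i j : V} (hij : i ≠ j) (hi : i ∉ N) (hj : j ∉ N)
    (hP : ∀ x y : ∀ k, A k, (∀ k ∈ N, x k = y k) →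
      P x * P y = P (Function.update y i (x i)) * P (Function.update x i (y i)))
    (x a : ∀ k, A k) {T : Finset V} (hiT : i ∉ T) :
    P ((insert i (insert j T)).piecewise x a) * P (T.piecewise x a) =
      P ((insert i T).piecewise x a) * P ((insert j T).piecewise x a) := by
  have hagree : ∀ k ∈ N, (insert i T).piecewise x a k = (insert j T).piecewise x a k := by
    intro k hk
    rw [piecewise_insert_of_ne _ _ _ (ne_of_mem_of_not_mem hk hi),
      piecewise_insert_of_ne _ _ _ (ne_of_mem_of_not_mem hk hj)]
  have hiT' : i ∉ insert j T := by simp [hij, hiT]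
  have hupd_j : Function.update ((insert j T).piecewise x a) i ((insert i T).piecewise x a i) =
      (insert i (insert j T)).piecewise x a := by
    rw [piecewise_insert_self, ← piecewise_insert]
  have hupd_i : Function.update ((insert i T).piecewise x a) i ((insert j T).piecewise x a i) =
      T.piecewise x a := by
    rw [piecewise_eq_of_notMem _ _ _ hiT', piecewise_insert, Function.update_idem,
      ← piecewise_eq_of_notMem T x a hiT, Function.update_eq_self]
  rw [← hupd_j, ← hupd_i]
  exact (hP _ _ hagree).symm

theorem gibbsPotential_log_eq_zero {V : Type*} [DecidableEq V] {A : V → Type*}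
    {P : (∀ i, A i) → ℝ} (hpos : ∀ x, 0 < P x) {N : Finset V} {i j : V} (hij : i ≠ j)
    (hi : i ∉ N) (hj : j ∉ N)
    (hP : ∀ x y : ∀ k, A k, (∀ k ∈ N, x k = y k) →
      P x * P y = P (Function.update y i (x i)) * P (Function.update x i (y i)))
    (a x : ∀ k, A k) {S : Finset V} (hiS : i ∈ S) (hjS : j ∈ S) :
    gibbsPotential a (fun x => Real.log (P x)) S x = 0 :=
  gibbsPotential_eq_zero hiS hjS hij x fun T hiT => by
    simp only [← Real.log_mul (hpos _).ne' (hpos _).ne',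
      mul_piecewise_insert_insert hij hi hj hP x a hiT]

section Cliques
variable {V : Type*} {E : Finset (V × V)}

theorem IsClique'.exists_isMaxClique_superset [Finite V] {S : Finset V} (hS : IsClique' E S) :
    ∃ C, IsMaxClique E C ∧ S ⊆ C := by
  obtain ⟨C, hSC, hC⟩ := Finite.exists_le_maximal hS
  exact ⟨C, ⟨hC.prop, fun C' hC' hCC' => hC.eq_of_le hC' hCC'⟩, hSC⟩

theorem exists_sum_eq_sum_isMaxClique [Fintype V] {A : V → Type*} {M : Type*}
    [AddCommMonoid M] {HCl : Finset (Finset V)} (hHCl : ∀ C, C ∈ HCl ↔ IsMaxClique E C)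
    {φ : Finset V → (∀ i, A i) → M} (hφ : ∀ S, DependsOn (φ S) S)
    (hφ_zero : ∀ S, ¬ IsClique' E S → φ S = 0) :
    ∃ ψ : Finset V → (∀ i, A i) → M,
      (∀ C, DependsOn (ψ C) C) ∧ ∀ x, ∑ S, φ S x = ∑ C ∈ HCl, ψ C x := by
  classical
  have hmax : ∀ S, ∃ C, IsClique' E S → C ∈ HCl ∧ S ⊆ C := fun S => by
    by_cases hS : IsClique' E S
    · obtain ⟨C, hC, hSC⟩ := hS.exists_isMaxClique_superset
      exact ⟨C, fun _ => ⟨(hHCl C).2 hC, hSC⟩⟩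
    · exact ⟨∅, fun h => absurd h hS⟩
  choose m hm using hmax
  set K := univ.filter (IsClique' E)
  refine ⟨fun C x => ∑ S ∈ K with m S = C, φ S x, fun C x y hxy => sum_congr rfl fun S hS => ?_,
    fun x => ?_⟩
  · obtain ⟨hSK, rfl⟩ := mem_filter.1 hS
    exact hφ S fun i hi => hxy i ((hm S (mem_filter.1 hSK).2).2 hi)
  · rw [sum_fiberwise_of_maps_to fun S hS => (hm S (mem_filter.1 hS).2).1]
    refine (sum_subset (filter_subset _ _) fun S _ hS => ?_).symm
    rw [hφ_zero S (by simpa [K] using hS), Pi.zero_apply]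

end Cliques

/-- The local Markov property is encoded, for positive `P`, as
`P x * P y = P (x_i, y_{-i}) * P (y_i, x_{-i})` whenever `x` and `y` agree on the neighbours of
`i`. -/
theorem hammersley_clifford_general {V : Type*} [Fintype V] [DecidableEq V]
    {A : V → Type*} [∀ i, Nonempty (A i)]
    (E : Finset (V × V))
    (hirr : ∀ i : V, (i, i) ∉ E)
    (P : (∀ i, A i) → ℝ) (hpos : ∀ x, 0 < P x)
    (hMarkov : ∀ (i : V) (x y : ∀ j, A j),
      (∀ j ∈ (E.filter (fun p => p.1 = i)).image Prod.snd, x j = y j) →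
      P x * P y = P (Function.update y i (x i)) * P (Function.update x i (y i)))
    (HCl : Finset (Finset V)) (hHCl : ∀ C : Finset V, C ∈ HCl ↔ IsMaxClique E C) :
    ∃ ζ : Finset V → (∀ i, A i) → ℝ,
      (∀ C ∈ HCl, (∀ x, 0 < ζ C x) ∧
        ∀ x y : ∀ i, A i, (∀ i ∈ C, x i = y i) → ζ C x = ζ C y) ∧
      ∀ x, P x = ∏ C ∈ HCl, ζ C x := by
  obtain ⟨a⟩ : Nonempty (∀ i, A i) := inferInstance
  have hvanish : ∀ S, ¬ IsClique' E S → gibbsPotential a (fun x => Real.log (P x)) S = 0 := by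
    intro S hS
    simp only [IsClique', not_forall] at hS
    obtain ⟨i, hi, j, hj, hij, hE⟩ := hS
    funext x
    exact gibbsPotential_log_eq_zero hpos hij (by simpa using hirr i) (by simpa using hE)
      (hMarkov i) a x hi hj
  obtain ⟨ψ, hψ, hsum⟩ :=
    exists_sum_eq_sum_isMaxClique hHCl (gibbsPotential_dependsOn a _) hvanish
  refine ⟨fun C x => Real.exp (ψ C x), fun C _ => ⟨fun x => Real.exp_pos _,
    fun x y hxy => congrArg Real.exp (hψ C hxy)⟩, fun x => ?_⟩
  rw [← Real.exp_sum, ← hsum, sum_gibbsPotential, Real.exp_log (hpos x)]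

/-- Hammersley–Clifford: a strictly positive finite-valued random vector satisfying the
local Markov property w.r.t. an undirected graph `G` (formulated, for positive
distributions, as `P(x)·P(y) = P(x_i, y_{-i})·P(y_i, x_{-i})` whenever `x` and `y` agree
on the neighborhood `N_i`) factorizes over the maximal cliques of `G`. -/
theorem hammersley_clifford {V : Type*} [Fintype V] [DecidableEq V]
    {A : V → Type*} [∀ i, Fintype (A i)] [∀ i, Nonempty (A i)]
    (E : Finset (V × V))
    (hsym : ∀ i j : V, (i, j) ∈ E → (j, i) ∈ E) (hirr : ∀ i : V, (i, i) ∉ E)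
    (P : (∀ i, A i) → ℝ) (hpos : ∀ x, 0 < P x) (hsum : ∑ x : ∀ i, A i, P x = 1)
    (hMarkov : ∀ (i : V) (x y : ∀ j, A j),
      (∀ j ∈ (E.filter (fun p => p.1 = i)).image Prod.snd, x j = y j) →
      P x * P y = P (Function.update y i (x i)) * P (Function.update x i (y i)))
    (HCl : Finset (Finset V)) (hHCl : ∀ C : Finset V, C ∈ HCl ↔ IsMaxClique E C) :
    ∃ ζ : Finset V → (∀ i, A i) → ℝ,
      (∀ C ∈ HCl, (∀ x, 0 < ζ C x) ∧
        ∀ x y : ∀ i, A i, (∀ i ∈ C, x i = y i) → ζ C x = ζ C y) ∧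
      ∀ x, P x = ∏ C ∈ HCl, ζ C x :=
  hammersley_clifford_general E hirr P hpos hMarkov HCl hHCl
end
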